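/- arXiv:2207.03933 — 3 statements merged into one kernel-verified Lean document; each statement's English description precedes it below -/
import Mathlib

section
/- Let μ be a probability distribution on ℝ^d, C ⊆ ℝ^d a compact set with μ(C) > 0 and covering number N = N(ρ/2; C, ‖·‖). Let f* be a measurable ground truth classifier into {0,1}. Draw m i.i.d. samples from μ and flip each label independently with probability η ∈ (0,1). If m ≥ (8N/(μ(C)·η))·log(2N/δ), then with probability at least 1 − δ, every classifier f that interpolates the noisy training set has adversarial risk R_{Adv,ρ}(f, μ) ≥ (1/4)·μ(C). -/
open MeasureTheory Metric Set
open scoped ENNReal NNReal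

/-- The covering number `N(r; C, ‖·‖)`: the minimum number of balls of radius `r` whose union
contains `C`. -/
noncomputable def coveringNumber {E : Type*} [PseudoMetricSpace E] (r : ℝ) (C : Set E) : ℕ :=
  sInf {n : ℕ | ∃ s : Finset E, s.card = n ∧ C ⊆ ⋃ c ∈ s, closedBall c r}

/-- The adversarial risk of `f` w.r.t. ground truth `fstar` and distribution `μ` at radius
`ρ`: the probability that some point within distance `ρ` of the sample is classified
differently from the ground truth label of the sample. -/
noncomputable def advRisk {E : Type*} [PseudoMetricSpace E] [MeasurableSpace E]
    (μ : MeasureTheory.Measure E) (ρ : ℝ) (fstar f : E → Bool) : ℝ≥0∞ :=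
  μ {x | ∃ z, dist z x ≤ ρ ∧ f z ≠ fstar x}

private lemma aux_mul_div_two (a : ℝ≥0∞) (N : ℕ) (hN : (N:ℝ≥0∞) ≠ 0) :
    (N:ℝ≥0∞) * (a / (2 * N)) = a / 2 := by
  rw [div_eq_mul_inv, ENNReal.mul_inv (Or.inl (by norm_num)) (Or.inl (by norm_num)),
    div_eq_mul_inv]
  have h1 : (N:ℝ≥0∞) * (a * (2⁻¹ * (N:ℝ≥0∞)⁻¹)) = ((N:ℝ≥0∞) * (N:ℝ≥0∞)⁻¹) * (a * 2⁻¹) := by ring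
  rw [h1, ENNReal.mul_inv_cancel hN (by simp), one_mul]

private lemma aux_quarter (a : ℝ≥0∞) : a / 2 / 2 = (1/4) * a := by
  have h4 : ((4:ℝ≥0∞))⁻¹ = 2⁻¹ * 2⁻¹ := by
    rw [← ENNReal.mul_inv (by norm_num) (by norm_num)]; norm_num
  rw [div_eq_mul_inv, div_eq_mul_inv, one_div, h4]; ring

set_option maxHeartbeats 1000000 in
/-- **Label noise guarantees adversarial risk (main theorem).**
Let `μ` be a probability measure on `ℝ^d`, `C` compact with `μ(C) > 0` and covering number
`N = N(ρ/2; C)`.  Draw `m` i.i.d. samples, flipping each label independently with probability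
`η`.  If `m ≥ (8N/(μ(C)η))·log(2N/δ)`, then with probability at least `1 − δ` every classifier
interpolating the noisy training set has adversarial risk at least `μ(C)/4`. -/
theorem advRisk_lower_bound {d : ℕ} (μ : Measure (EuclideanSpace ℝ (Fin d)))
    [IsProbabilityMeasure μ]
    (C : Set (EuclideanSpace ℝ (Fin d))) (hC : IsCompact C) (hCpos : 0 < (μ C).toReal)
    (ρ : ℝ) (hρ : 0 < ρ) (N : ℕ) (hN : N = coveringNumber (ρ / 2) C)
    (fstar : EuclideanSpace ℝ (Fin d) → Bool) (hfstar : Measurable fstar)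
    (η : ℝ) (hη0 : 0 < η) (hη1 : ENNReal.ofReal η ≤ 1)
    (δ : ℝ) (hδ : 0 < δ) (m : ℕ)
    (hm : (8 * N / ((μ C).toReal * η)) * Real.log (2 * N / δ) ≤ m) :
    1 - ENNReal.ofReal δ ≤
      (Measure.pi (fun _ : Fin m =>
          μ.prod ((PMF.bernoulli η.toNNReal (ENNReal.coe_le_one_iff.mp hη1)).toMeasure)))
        {ω : Fin m → EuclideanSpace ℝ (Fin d) × Bool |
          ∀ f : EuclideanSpace ℝ (Fin d) → Bool,
            (∀ i : Fin m, f (ω i).1 = xor (ω i).2 (fstar (ω i).1)) →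
            (1 / 4 : ℝ≥0∞) * μ C ≤ advRisk μ ρ fstar f} := by
  classical
  by_cases hδ1 : 1 ≤ δ
  · rw [tsub_eq_zero_of_le (ENNReal.one_le_ofReal.mpr hδ1)]
    exact zero_le
  push_neg at hδ1
  have hCtop : μ C ≠ ⊤ := measure_ne_top μ C
  have hC0 : μ C ≠ 0 := by
    intro h; rw [h] at hCpos; simp at hCpos
  -- a cover of cardinality `N` exists
  have hne : {n : ℕ | ∃ s : Finset (EuclideanSpace ℝ (Fin d)),
      s.card = n ∧ C ⊆ ⋃ c ∈ s, closedBall c (ρ/2)}.Nonempty := by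
    obtain ⟨t, ht⟩ := hC.elim_finite_subcover (fun x : EuclideanSpace ℝ (Fin d) => ball x (ρ/2))
      (fun x => isOpen_ball) (fun x _ => mem_iUnion.mpr ⟨x, mem_ball_self (by linarith)⟩)
    exact ⟨t.card, t, rfl, ht.trans (iUnion₂_mono fun c _ => ball_subset_closedBall)⟩
  obtain ⟨s, hscard, hscover⟩ :
      ∃ s : Finset (EuclideanSpace ℝ (Fin d)),
        s.card = N ∧ C ⊆ ⋃ c ∈ s, closedBall c (ρ/2) := by
    rw [hN]; exact Nat.sInf_mem hne
  have hNpos : 0 < N := by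
    rcases Nat.eq_zero_or_pos N with h | h
    · exfalso
      apply hC0
      rw [h, Finset.card_eq_zero] at hscard
      subst hscard
      exact measure_mono_null (by simpa using hscover) measure_empty
    · exact h
  have hN0 : (N:ℝ≥0∞) ≠ 0 := by exact_mod_cast hNpos.ne'
  -- enumeration of the centers
  set c : ℕ → EuclideanSpace ℝ (Fin d) := fun k => s.toList.getD k 0 with hc
  have hcov : ∀ x ∈ C, ∃ k, k < N ∧ x ∈ closedBall (c k) (ρ/2) := by
    intro x hx
    obtain ⟨y, hy, hxy⟩ := mem_iUnion₂.mp (hscover hx)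
    obtain ⟨⟨n, hn⟩, hget⟩ := List.mem_iff_get.mp (Finset.mem_toList.mpr hy)
    have hlen : n < N := by rwa [Finset.length_toList, hscard] at hn
    have hcn : c n = y := by
      simp only [hc]
      rw [List.getD_eq_getElem?_getD, List.getElem?_eq_getElem hn]
      exact hget
    exact ⟨n, hlen, by rw [hcn]; exact hxy⟩
  -- disjointified cover of `C`
  set A : ℕ → Set (EuclideanSpace ℝ (Fin d)) :=
    fun k => if k < N then closedBall (c k) (ρ/2) ∩ C else ∅ with hA
  set D : ℕ → Set (EuclideanSpace ℝ (Fin d)) := disjointed A with hD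
  have hAmeas : ∀ k, MeasurableSet (A k) := by
    intro k; by_cases h : k < N
    · simp only [hA, if_pos h]
      exact measurableSet_closedBall.inter hC.isClosed.measurableSet
    · simp only [hA, if_neg h]; exact MeasurableSet.empty
  have hDmeas : ∀ k, MeasurableSet (D k) := MeasurableSet.disjointed hAmeas
  have hDsub : ∀ k, D k ⊆ A k := disjointed_subset A
  have hDdisj : Pairwise (Function.onFun Disjoint D) := disjoint_disjointed A
  have hDC : (⋃ k, D k) = C := by
    rw [hD, iUnion_disjointed]
    apply subset_antisymm
    · refine iUnion_subset fun k => ?_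
      by_cases h : k < N
      · simp only [hA, if_pos h]; exact inter_subset_right
      · simp only [hA, if_neg h]; exact empty_subset _
    · intro x hx
      obtain ⟨k, hk, hxk⟩ := hcov x hx
      exact mem_iUnion.mpr ⟨k, by simp only [hA, if_pos hk]; exact ⟨hxk, hx⟩⟩
  have hDzero : ∀ k, ¬ k < N → D k = ∅ := by
    intro k h
    have := hDsub k
    simp only [hA, if_neg h] at this
    exact eq_empty_of_subset_empty this
  have hDball : ∀ k, k < N → D k ⊆ closedBall (c k) (ρ/2) := by
    intro k h
    have := hDsub k
    simp only [hA, if_pos h] at this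
    exact this.trans inter_subset_left
  -- majority labels
  set b : ℕ → Bool := fun k =>
    if μ (D k ∩ fstar ⁻¹' {false}) ≤ μ (D k ∩ fstar ⁻¹' {true}) then true else false with hb
  set M : ℕ → Set (EuclideanSpace ℝ (Fin d)) := fun k => D k ∩ fstar ⁻¹' {b k} with hM
  have hMmeas : ∀ k, MeasurableSet (M k) := fun k =>
    (hDmeas k).inter (hfstar (measurableSet_singleton _))
  have hMsub : ∀ k, M k ⊆ D k := fun k => inter_subset_left
  have hMD : ∀ k, μ (D k) ≤ 2 * μ (M k) := by
    intro k
    have hsplit : D k = (D k ∩ fstar ⁻¹' {true}) ∪ (D k ∩ fstar ⁻¹' {false}) := by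
      ext x
      simp only [mem_union, mem_inter_iff, mem_preimage, mem_singleton_iff]
      constructor
      · intro hx
        cases h : fstar x
        · exact Or.inr ⟨hx, rfl⟩
        · exact Or.inl ⟨hx, rfl⟩
      · rintro (⟨hx, _⟩ | ⟨hx, _⟩) <;> exact hx
    have h1 : μ (D k) ≤ μ (D k ∩ fstar ⁻¹' {true}) + μ (D k ∩ fstar ⁻¹' {false}) := by
      conv_lhs => rw [hsplit]
      exact measure_union_le _ _
    by_cases h : μ (D k ∩ fstar ⁻¹' {false}) ≤ μ (D k ∩ fstar ⁻¹' {true})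
    · have hbk : M k = D k ∩ fstar ⁻¹' {true} := by simp only [hM, hb, if_pos h]
      rw [hbk, two_mul]
      exact h1.trans (add_le_add_right h _)
    · have hbk : M k = D k ∩ fstar ⁻¹' {false} := by simp only [hM, hb, if_neg h]
      rw [hbk, two_mul]
      exact h1.trans (add_le_add_left (le_of_not_ge h) _)
  -- heavy cells
  set H : Finset ℕ := (Finset.range N).filter (fun k => μ C / (2*N) ≤ μ (D k)) with hH
  have hsum_total : ∑ k ∈ Finset.range N, μ (D k) = μ C := by
    have h1 : μ C = ∑' k, μ (D k) := by
      rw [← hDC]; exact measure_iUnion hDdisj hDmeas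
    rw [h1, tsum_eq_sum (fun k hk => by
      rw [hDzero k (fun h => hk (Finset.mem_range.mpr h))]; exact measure_empty)]
  have hHsum : μ C / 2 ≤ ∑ k ∈ H, μ (D k) := by
    have hlight : ∑ k ∈ (Finset.range N).filter (fun k => ¬ μ C / (2*N) ≤ μ (D k)), μ (D k)
        ≤ μ C / 2 := by
      have h2 := Finset.sum_le_card_nsmul
        ((Finset.range N).filter (fun k => ¬ μ C / (2*N) ≤ μ (D k)))
        (fun k => μ (D k)) (μ C / (2*N))
        (fun k hk => le_of_lt (lt_of_not_ge (Finset.mem_filter.mp hk).2))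
      have hcard : ((Finset.range N).filter (fun k => ¬ μ C / (2*N) ≤ μ (D k))).card ≤ N :=
        (Finset.card_filter_le _ _).trans (le_of_eq (Finset.card_range N))
      calc ∑ k ∈ (Finset.range N).filter (fun k => ¬ μ C / (2*N) ≤ μ (D k)), μ (D k)
          ≤ _ • (μ C / (2*N)) := h2
        _ ≤ (N:ℝ≥0∞) * (μ C / (2*N)) := by
            rw [nsmul_eq_mul]
            exact mul_le_mul_left (by exact_mod_cast hcard) _
        _ = μ C / 2 := aux_mul_div_two (μ C) N hN0
    have htot : μ C = ∑ k ∈ H, μ (D k)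
        + ∑ k ∈ (Finset.range N).filter (fun k => ¬ μ C / (2*N) ≤ μ (D k)), μ (D k) := by
      rw [hH, Finset.sum_filter_add_sum_filter_not, hsum_total]
    have hle : μ C / 2 + μ C / 2 ≤ ∑ k ∈ H, μ (D k) + μ C / 2 := by
      calc μ C / 2 + μ C / 2 = μ C := ENNReal.add_halves _
        _ = _ + _ := htot
        _ ≤ ∑ k ∈ H, μ (D k) + μ C / 2 := add_le_add_right hlight _
    exact (ENNReal.add_le_add_iff_right
      (ne_top_of_le_ne_top hCtop ENNReal.half_le_self)).mp hle
  have hquarter : (1/4 : ℝ≥0∞) * μ C ≤ ∑ k ∈ H, μ (M k) := by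
    have h1 : ∀ k ∈ H, μ (D k) / 2 ≤ μ (M k) := fun k _ =>
      (ENNReal.div_le_iff_le_mul (Or.inl two_ne_zero) (Or.inl ENNReal.ofNat_ne_top)).mpr
        (by rw [mul_comm]; exact hMD k)
    calc (1/4 : ℝ≥0∞) * μ C = μ C / 2 / 2 := (aux_quarter (μ C)).symm
      _ ≤ (∑ k ∈ H, μ (D k)) / 2 := ENNReal.div_le_div_right hHsum 2
      _ = (∑ k ∈ H, μ (D k)) * 2⁻¹ := div_eq_mul_inv _ _
      _ = ∑ k ∈ H, μ (D k) * 2⁻¹ := Finset.sum_mul _ _ _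
      _ = ∑ k ∈ H, μ (D k) / 2 := by simp [div_eq_mul_inv]
      _ ≤ ∑ k ∈ H, μ (M k) := Finset.sum_le_sum h1
  -- the product measure and bad events
  set ν : Measure (EuclideanSpace ℝ (Fin d) × Bool) :=
    μ.prod ((PMF.bernoulli η.toNNReal (ENNReal.coe_le_one_iff.mp hη1)).toMeasure) with hν
  haveI hνprob : IsProbabilityMeasure ν := by rw [hν]; infer_instance
  set P : Measure (Fin m → EuclideanSpace ℝ (Fin d) × Bool) :=
    Measure.pi (fun _ : Fin m => ν) with hP
  haveI hPprob : IsProbabilityMeasure P := by rw [hP]; infer_instance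
  have hνS : ∀ k, ν (M k ×ˢ ({true} : Set Bool)) = μ (M k) * ENNReal.ofReal η := by
    intro k
    rw [hν, Measure.prod_prod,
      PMF.toMeasure_apply_singleton _ _ (measurableSet_singleton _), PMF.bernoulli_apply]
    rfl
  set Bad : ℕ → Set (Fin m → EuclideanSpace ℝ (Fin d) × Bool) :=
    fun k => univ.pi (fun _ : Fin m => (M k ×ˢ ({true} : Set Bool))ᶜ) with hBad
  have hSmeas : ∀ k, MeasurableSet (M k ×ˢ ({true} : Set Bool)) := fun k =>
    (hMmeas k).prod (measurableSet_singleton _)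
  have hPBad : ∀ k, P (Bad k) = (1 - μ (M k) * ENNReal.ofReal η) ^ m := by
    intro k
    rw [hBad, hP, Measure.pi_pi]
    have hcompl : ν ((M k ×ˢ ({true} : Set Bool))ᶜ) = 1 - μ (M k) * ENNReal.ofReal η := by
      rw [prob_compl_eq_one_sub (hSmeas k), hνS k]
    rw [Finset.prod_congr rfl (fun i _ => hcompl)]
    simp
  -- per-cell probability bound
  have hterm : ∀ k ∈ H, (1 - μ (M k) * ENNReal.ofReal η) ^ m ≤ ENNReal.ofReal (δ / N) := by
    intro k hk
    set r : ℝ := (μ (M k)).toReal with hr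
    have hMtop : μ (M k) ≠ ⊤ := measure_ne_top _ _
    have hr0 : (0:ℝ) ≤ r := ENNReal.toReal_nonneg
    have hr1 : r ≤ 1 := by
      simpa using ENNReal.toReal_mono ENNReal.one_ne_top (prob_le_one (μ := μ) (s := M k))
    have hηle : η ≤ 1 := ENNReal.ofReal_le_one.mp hη1
    have hkH := Finset.mem_filter.mp hk
    have hkN : k < N := Finset.mem_range.mp hkH.1
    have hheavy : μ C / (2 * N) ≤ μ (D k) := hkH.2
    have hMk : μ C / (2 * N) / 2 ≤ μ (M k) := by
      calc μ C / (2 * N) / 2 ≤ μ (D k) / 2 := ENNReal.div_le_div_right hheavy 2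
        _ ≤ μ (M k) := (ENNReal.div_le_iff_le_mul (Or.inl two_ne_zero)
            (Or.inl ENNReal.ofNat_ne_top)).mpr (by rw [mul_comm]; exact hMD k)
    have hrlow : (μ C).toReal / (2 * N) / 2 ≤ r := by
      have h1 := ENNReal.toReal_mono hMtop hMk
      rwa [ENNReal.toReal_div, ENNReal.toReal_div, ENNReal.toReal_mul, ENNReal.toReal_ofNat,
        ENNReal.toReal_natCast] at h1
    have hq1 : r * η ≤ 1 := mul_le_one₀ hr1 hη0.le hηle
    have hq0 : 0 ≤ r * η := mul_nonneg hr0 hη0.le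
    have he1 : (1 : ℝ≥0∞) - μ (M k) * ENNReal.ofReal η = ENNReal.ofReal (1 - r * η) := by
      rw [ENNReal.ofReal_sub _ hq0, ENNReal.ofReal_one, ENNReal.ofReal_mul hr0, hr,
        ENNReal.ofReal_toReal hMtop]
    rw [he1, ← ENNReal.ofReal_pow (by linarith)]
    apply ENNReal.ofReal_le_ofReal
    -- pure real estimate
    set a : ℝ := (μ C).toReal with ha
    have hNr : (1:ℝ) ≤ (N:ℝ) := by exact_mod_cast hNpos
    have h2Nδ : (1:ℝ) < 2 * N / δ := by
      rw [lt_div_iff₀ hδ]; nlinarith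
    have hL : 0 < Real.log (2 * N / δ) := Real.log_pos h2Nδ
    have haη : (0:ℝ) < a * η := mul_pos hCpos hη0
    have hrlow' : a * η / (4 * N) ≤ r * η := by
      have h2 := mul_le_mul_of_nonneg_right hrlow hη0.le
      calc a * η / (4*N) = a / (2*N) / 2 * η := by ring
        _ ≤ r * η := h2
    have hqm : 2 * Real.log (2 * N / δ) ≤ (r * η) * m := by
      calc 2 * Real.log (2*N/δ)
          = (a*η/(4*(N:ℝ))) * ((8*N/(a*η)) * Real.log (2*N/δ)) := by
            field_simp
            ring
        _ ≤ (a*η/(4*(N:ℝ))) * m := mul_le_mul_of_nonneg_left hm (by positivity)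
        _ ≤ (r*η) * m := mul_le_mul_of_nonneg_right hrlow' (Nat.cast_nonneg m)
    calc (1 - r*η)^m ≤ Real.exp (-(r*η))^m := by
          apply pow_le_pow_left₀ (by linarith)
          nlinarith [Real.add_one_le_exp (-(r*η))]
      _ = Real.exp (-(r*η) * m) := by
          rw [mul_comm (-(r*η)) (m:ℝ), Real.exp_nat_mul]
      _ ≤ Real.exp (-(2 * Real.log (2*N/δ))) := Real.exp_le_exp.mpr (by nlinarith)
      _ = ((2*(N:ℝ)/δ)^2)⁻¹ := by
          rw [Real.exp_neg]
          congr 1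
          rw [show (2:ℝ) * Real.log (2*N/δ) = ((2:ℕ):ℝ) * Real.log (2*N/δ) by norm_num,
            Real.exp_nat_mul, Real.exp_log (by positivity)]
      _ ≤ δ / N := by
          have hrw : ((2*(N:ℝ)/δ)^2)⁻¹ = δ^2 / (2*(N:ℝ))^2 := by
            rw [div_pow, inv_div]
          rw [hrw, div_le_div_iff₀ (by positivity) (by positivity)]
          have hNpos' : (0:ℝ) < N := by exact_mod_cast hNpos
          have h1 : δ * N * δ ≤ δ * N * 1 :=
            mul_le_mul_of_nonneg_left hδ1.le (mul_nonneg hδ.le hNpos'.le)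
          have hN4 : (N:ℝ) ≤ 4 * N^2 := by
            nlinarith [mul_le_mul_of_nonneg_left hNr hNpos'.le]
          have h2 : δ * N ≤ δ * (4 * N^2) := mul_le_mul_of_nonneg_left hN4 hδ.le
          nlinarith [h1, h2]
  -- union bound
  have hcardH : H.card ≤ N := by
    rw [hH]
    exact (Finset.card_filter_le _ _).trans (le_of_eq (Finset.card_range N))
  have hunion : P (⋃ k ∈ H, Bad k) ≤ ENNReal.ofReal δ := by
    calc P (⋃ k ∈ H, Bad k) ≤ ∑ k ∈ H, P (Bad k) := measure_biUnion_finset_le H Bad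
      _ ≤ ∑ k ∈ H, ENNReal.ofReal (δ / N) :=
          Finset.sum_le_sum (fun k hk => (hPBad k) ▸ hterm k hk)
      _ = H.card • ENNReal.ofReal (δ / N) := by rw [Finset.sum_const]
      _ ≤ (N:ℝ≥0∞) * ENNReal.ofReal (δ / N) := by
          rw [nsmul_eq_mul]
          exact mul_le_mul_left (by exact_mod_cast hcardH) _
      _ = ENNReal.ofReal δ := by
          rw [← ENNReal.ofReal_natCast, ← ENNReal.ofReal_mul (Nat.cast_nonneg N)]
          congr 1
          field_simp
  -- the good event implies the adversarial risk bound
  have hGsub : (⋃ k ∈ H, Bad k)ᶜ ⊆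
      {ω : Fin m → EuclideanSpace ℝ (Fin d) × Bool |
        ∀ f : EuclideanSpace ℝ (Fin d) → Bool,
          (∀ i : Fin m, f (ω i).1 = xor (ω i).2 (fstar (ω i).1)) →
          (1 / 4 : ℝ≥0∞) * μ C ≤ advRisk μ ρ fstar f} := by
    intro ω hω
    intro f hf
    have hbadsub : ∀ k ∈ H, M k ⊆ {x | ∃ z, dist z x ≤ ρ ∧ f z ≠ fstar x} := by
      intro k hk x hx
      have hexi : ∃ i : Fin m, ω i ∈ M k ×ˢ ({true} : Set Bool) := by
        by_contra hcon
        push_neg at hcon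
        exact hω (mem_iUnion₂.mpr ⟨k, hk, (Set.mem_univ_pi).mpr fun i => hcon i⟩)
      obtain ⟨i, hi⟩ := hexi
      have hiM : (ω i).1 ∈ M k := hi.1
      have hitrue : (ω i).2 = true := hi.2
      have hkN : k < N := Finset.mem_range.mp (Finset.mem_filter.mp hk).1
      refine ⟨(ω i).1, ?_, ?_⟩
      · have h1 : (ω i).1 ∈ closedBall (c k) (ρ/2) := hDball k hkN (hMsub k hiM)
        have h2 : x ∈ closedBall (c k) (ρ/2) := hDball k hkN (hMsub k hx)
        calc dist (ω i).1 x ≤ dist (ω i).1 (c k) + dist (c k) x := dist_triangle _ _ _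
          _ ≤ ρ/2 + ρ/2 := add_le_add (mem_closedBall.mp h1)
              (by rw [dist_comm]; exact mem_closedBall.mp h2)
          _ = ρ := by ring
      · have hfz := hf i
        rw [hitrue] at hfz
        have hz : fstar (ω i).1 = b k := hiM.2
        have hx2 : fstar x = b k := hx.2
        rw [hfz, hz, hx2]
        simp
    show (1 / 4 : ℝ≥0∞) * μ C ≤ advRisk μ ρ fstar f
    rw [advRisk]
    have hMdisj : (↑H : Set ℕ).PairwiseDisjoint M := fun i _ j _ hij =>
      (hDdisj hij).mono (hMsub i) (hMsub j)
    calc (1 / 4 : ℝ≥0∞) * μ C ≤ ∑ k ∈ H, μ (M k) := hquarter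
      _ = μ (⋃ k ∈ H, M k) := (measure_biUnion_finset hMdisj (fun k _ => hMmeas k)).symm
      _ ≤ μ {x | ∃ z, dist z x ≤ ρ ∧ f z ≠ fstar x} := measure_mono (iUnion₂_subset hbadsub)
  -- conclusion
  have hmeasBad : MeasurableSet (⋃ k ∈ H, Bad k) :=
    Finset.measurableSet_biUnion H (fun k _ =>
      MeasurableSet.univ_pi (fun _ => (hSmeas k).compl))
  calc 1 - ENNReal.ofReal δ ≤ 1 - P (⋃ k ∈ H, Bad k) := tsub_le_tsub_left hunion 1
    _ = P ((⋃ k ∈ H, Bad k)ᶜ) := (prob_compl_eq_one_sub hmeasBad).symm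
    _ ≤ P {ω : Fin m → EuclideanSpace ℝ (Fin d) × Bool |
          ∀ f : EuclideanSpace ℝ (Fin d) → Bool,
            (∀ i : Fin m, f (ω i).1 = xor (ω i).2 (fstar (ω i).1)) →
            (1 / 4 : ℝ≥0∞) * μ C ≤ advRisk μ ρ fstar f} := measure_mono hGsub
end

section
/- Let μ be a compactly supported probability distribution on ℝ^d with N the covering number of supp(μ) by balls of radius ρ/2. Draw m i.i.d. samples with labels independently flipped with probability η. If m ≥ (8N/η)·log(2N/δ), then with probability at least 1 − δ, any interpolating classifier f satisfies R_{Adv,ρ}(f, μ) ≥ 1/4. -/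
open MeasureTheory Metric Set
open scoped ENNReal NNReal

/-- The topological support of a measure: points all of whose neighbourhoods have positive
measure. -/
def measureSupport {E : Type*} [TopologicalSpace E] [MeasurableSpace E]
    (μ : MeasureTheory.Measure E) : Set E :=
  {x | ∀ U ∈ nhds x, 0 < μ U}

section Aux
variable {E : Type*} [TopologicalSpace E] [MeasurableSpace E]

lemma isClosed_measureSupport (μ : Measure E) : IsClosed (measureSupport μ) := by
  rw [← isOpen_compl_iff, isOpen_iff_mem_nhds]
  intro x hx
  simp only [measureSupport, mem_compl_iff, mem_setOf_eq, not_forall] at hx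
  obtain ⟨U, hU, h0⟩ := hx
  have h0' : μ U = 0 := by simpa using h0
  refine Filter.mem_of_superset (interior_mem_nhds.2 hU) fun y hy hyS => ?_
  have := hyS (interior U) (isOpen_interior.mem_nhds hy)
  exact absurd (measure_mono_null interior_subset h0') (by simpa using this.ne')

lemma measureSupport_compl_null [SecondCountableTopology E]
    (μ : Measure E) : μ (measureSupport μ)ᶜ = 0 := by
  have h : ∀ x : ((measureSupport μ)ᶜ : Set E), ∃ U : Set E, IsOpen U ∧ (x : E) ∈ U ∧ μ U = 0 := by
    rintro ⟨x, hx⟩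
    simp only [measureSupport, mem_compl_iff, mem_setOf_eq, not_forall] at hx
    obtain ⟨U, hU, h0⟩ := hx
    exact ⟨interior U, isOpen_interior, mem_interior_iff_mem_nhds.2 hU,
      measure_mono_null interior_subset (by simpa using h0)⟩
  choose V hVo hVx hV0 using h
  obtain ⟨T, hTc, hTU⟩ := TopologicalSpace.isOpen_iUnion_countable V hVo
  refine measure_mono_null (fun x hx => ?_) ((measure_biUnion_null_iff hTc).2 fun i _ => hV0 i)
  rw [hTU]
  exact mem_iUnion.2 ⟨⟨x, hx⟩, hVx _⟩

end Aux

/-- **Corollary for compactly supported distributions.** If `N` is the covering number of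
`supp(μ)` by balls of radius `ρ/2` and `m ≥ (8N/η)·log(2N/δ)`, then with probability at least
`1 − δ` every interpolating classifier has adversarial risk at least `1/4`. -/
theorem advRisk_lower_bound_support {d : ℕ} (μ : Measure (EuclideanSpace ℝ (Fin d)))
    [IsProbabilityMeasure μ]
    (hsupp : IsCompact (measureSupport μ))
    (ρ : ℝ) (hρ : 0 < ρ) (N : ℕ) (hN : N = coveringNumber (ρ / 2) (measureSupport μ))
    (fstar : EuclideanSpace ℝ (Fin d) → Bool) (hfstar : Measurable fstar)
    (η : ℝ) (hη0 : 0 < η) (hη1 : ENNReal.ofReal η ≤ 1)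
    (δ : ℝ) (hδ : 0 < δ) (m : ℕ)
    (hm : (8 * N / η) * Real.log (2 * N / δ) ≤ m) :
    1 - ENNReal.ofReal δ ≤
      (Measure.pi (fun _ : Fin m =>
          μ.prod ((PMF.bernoulli (Real.toNNReal η) (ENNReal.coe_le_one_iff.mp hη1)).toMeasure)))
        {ω : Fin m → EuclideanSpace ℝ (Fin d) × Bool |
          ∀ f : EuclideanSpace ℝ (Fin d) → Bool,
            (∀ i : Fin m, f (ω i).1 = xor (ω i).2 (fstar (ω i).1)) →
            (1 / 4 : ℝ≥0∞) ≤ advRisk μ ρ fstar f} := by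
  classical
  let X := EuclideanSpace ℝ (Fin d)
  set K : Set X := measureSupport μ with hKdef
  have hKmeas : MeasurableSet K := (isClosed_measureSupport μ).measurableSet
  have hK1 : μ K = 1 := by
    refine le_antisymm prob_le_one ?_
    have : μ univ ≤ μ K + μ Kᶜ := by
      rw [← union_compl_self K]; exact measure_union_le _ _
    rwa [measure_univ, measureSupport_compl_null μ, add_zero] at this
  -- obtain an optimal cover
  have hcov : ∃ s : Finset X, s.card = N ∧ K ⊆ ⋃ c ∈ s, closedBall c (ρ / 2) := by
    have hne : {n : ℕ | ∃ s : Finset X, s.card = n ∧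
        K ⊆ ⋃ c ∈ s, closedBall c (ρ / 2)}.Nonempty := by
      obtain ⟨t, ht⟩ := hsupp.elim_finite_subcover (fun c : X => ball c (ρ / 2))
        (fun _ => isOpen_ball) (fun x _ => mem_iUnion.2 ⟨x, mem_ball_self (by linarith)⟩)
      exact ⟨t.card, t, rfl, ht.trans (iUnion₂_mono fun c _ => ball_subset_closedBall)⟩
    have := Nat.sInf_mem hne
    rw [hN, _root_.coveringNumber]
    exact this
  obtain ⟨s, hscard, hscover⟩ := hcov
  -- N ≥ 1
  have hKne : K.Nonempty := by
    rcases eq_empty_or_nonempty K with h | h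
    · rw [h, measure_empty] at hK1; exact absurd hK1 (by norm_num)
    · exact h
  have hN1 : 1 ≤ N := by
    rcases Nat.eq_zero_or_pos N with h | h
    · exfalso
      obtain ⟨x, hx⟩ := hKne
      have hs0 : s = ∅ := Finset.card_eq_zero.1 (by rw [hscard, h])
      have := hscover hx
      simp [hs0] at this
    · exact h
  have hNR : (0:ℝ) < N := by exact_mod_cast hN1
  -- regions
  set R : X × Bool → Set X :=
    fun p => (K ∩ closedBall p.1 (ρ / 2)) ∩ fstar ⁻¹' {p.2} with hRdef
  have hRmeas : ∀ p, MeasurableSet (R p) := fun p =>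
    (hKmeas.inter measurableSet_closedBall).inter (hfstar (measurableSet_singleton _))
  set θ : ℝ := 1 / (8 * N) with hθdef
  have hθ0 : 0 < θ := by positivity
  set P : Finset (X × Bool) := s ×ˢ (Finset.univ : Finset Bool) with hPdef
  have hPcard : P.card = 2 * N := by
    rw [hPdef, Finset.card_product, hscard]
    simp [mul_comm]
  set H : Finset (X × Bool) := P.filter (fun p => ENNReal.ofReal θ ≤ μ (R p)) with hHdef
  -- cover of K by regions
  have hKcover : K ⊆ ⋃ p ∈ P, R p := by
    intro x hx
    obtain ⟨c, hc, hxc⟩ := mem_iUnion₂.1 (hscover hx)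
    exact mem_iUnion₂.2 ⟨(c, fstar x), by simp [hPdef, hc], ⟨⟨hx, hxc⟩, rfl⟩⟩
  -- the measure ν and good sets
  set ν : Measure (X × Bool) := μ.prod ((PMF.bernoulli (Real.toNNReal η) (ENNReal.coe_le_one_iff.mp hη1)).toMeasure) with hνdef
  set G : X × Bool → Set (X × Bool) := fun p => (R p) ×ˢ ({true} : Set Bool) with hGdef
  have hGmeas : ∀ p, MeasurableSet (G p) := fun p => (hRmeas p).prod (measurableSet_singleton _)
  have hνG : ∀ p, ν (G p) = μ (R p) * ENNReal.ofReal η := by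
    intro p
    rw [hνdef, hGdef, Measure.prod_prod]
    congr 1
    rw [PMF.toMeasure_apply_singleton _ _ (measurableSet_singleton _)]
    rfl
  set PP : Measure (Fin m → X × Bool) := Measure.pi (fun _ : Fin m => ν) with hPPdef
  -- the good event
  set Ev : Set (Fin m → X × Bool) := ⋂ p ∈ H, {ω | ∃ i, ω i ∈ G p} with hEvdef
  have hEvMeas : MeasurableSet Ev := by
    refine MeasurableSet.biInter (H : Set (X × Bool)).to_countable fun p _ => ?_
    have : {ω : Fin m → X × Bool | ∃ i, ω i ∈ G p} = ⋃ i, (fun ω => ω i) ⁻¹' (G p) := by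
      ext ω; simp
    rw [this]
    exact MeasurableSet.iUnion fun i => (measurable_pi_apply i) (hGmeas p)
  -- per-region failure bound
  have hreal : Real.exp (-(m * (θ * η))) ≤ δ / (2 * N) := by
    have h1 : Real.log (2 * N / δ) ≤ m * (θ * η) := by
      have h2 := mul_le_mul_of_nonneg_right hm (le_of_lt (div_pos hη0 (by positivity : (0:ℝ) < 8 * N)))
      have h3 : (8 * N / η) * Real.log (2 * N / δ) * (η / (8 * N))
          = Real.log (2 * N / δ) := by field_simp
      rw [h3] at h2
      calc Real.log (2 * N / δ) ≤ m * (η / (8 * N)) := h2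
        _ = m * (θ * η) := by rw [hθdef]; ring
    have hpos : (0:ℝ) < δ / (2 * N) := by positivity
    calc Real.exp (-(m * (θ * η))) ≤ Real.exp (Real.log (δ / (2 * N))) := by
          apply Real.exp_le_exp.2
          have hlog1 : Real.log (δ / (2 * N)) = Real.log δ - Real.log (2 * N) :=
            Real.log_div (ne_of_gt hδ) (by positivity)
          have hlog2 : Real.log (2 * (N:ℝ) / δ) = Real.log (2 * N) - Real.log δ :=
            Real.log_div (by positivity) (ne_of_gt hδ)
          rw [hlog1]
          rw [hlog2] at h1
          linarith [h1]
      _ = δ / (2 * N) := Real.exp_log hpos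
  have hfail : ∀ p ∈ H, PP {ω | ∀ i, ω i ∉ G p} ≤ ENNReal.ofReal (δ / (2 * N)) := by
    intro p hp
    have hHp : ENNReal.ofReal θ ≤ μ (R p) := (Finset.mem_filter.1 hp).2
    have hset : {ω : Fin m → X × Bool | ∀ i, ω i ∉ G p}
        = Set.pi univ (fun _ : Fin m => (G p)ᶜ) := by
      ext ω; simp [Set.mem_pi]
    have hν1 : ν (G p)ᶜ ≤ ENNReal.ofReal (Real.exp (-(θ * η))) := by
      have : ν (G p)ᶜ = 1 - ν (G p) := prob_compl_eq_one_sub (hGmeas p)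
      rw [this]
      have hlow : ENNReal.ofReal (θ * η) ≤ ν (G p) := by
        rw [hνG p, ENNReal.ofReal_mul hθ0.le]
        exact mul_le_mul_left hHp _
      calc 1 - ν (G p) ≤ 1 - ENNReal.ofReal (θ * η) := tsub_le_tsub_left hlow 1
        _ = ENNReal.ofReal (1 - θ * η) := by
            rw [ENNReal.ofReal_sub _ (by positivity), ENNReal.ofReal_one]
        _ ≤ ENNReal.ofReal (Real.exp (-(θ * η))) := by
            apply ENNReal.ofReal_le_ofReal
            linarith [Real.add_one_le_exp (-(θ * η))]
    calc PP {ω : Fin m → X × Bool | ∀ i, ω i ∉ G p}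
        = ∏ _i : Fin m, ν (G p)ᶜ := by rw [hset, hPPdef, Measure.pi_pi]
      _ = (ν (G p)ᶜ) ^ m := by rw [Finset.prod_const, Finset.card_univ, Fintype.card_fin]
      _ ≤ (ENNReal.ofReal (Real.exp (-(θ * η)))) ^ m := pow_le_pow_left' hν1 m
      _ = ENNReal.ofReal (Real.exp (-(θ * η)) ^ m) := by
            rw [ENNReal.ofReal_pow (Real.exp_pos _).le]
      _ ≤ ENNReal.ofReal (δ / (2 * N)) := by
            apply ENNReal.ofReal_le_ofReal
            rw [← Real.exp_nat_mul]
            calc Real.exp (m * -(θ * η)) = Real.exp (-(m * (θ * η))) := by ring_nf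
              _ ≤ δ / (2 * N) := hreal
  -- union bound
  have hEvc : PP Evᶜ ≤ ENNReal.ofReal δ := by
    have hEvc_eq : Evᶜ = ⋃ p ∈ H, {ω : Fin m → X × Bool | ∀ i, ω i ∉ G p} := by
      rw [hEvdef, compl_iInter₂]
      apply iUnion₂_congr
      intro p _
      ext ω; simp
    rw [hEvc_eq]
    calc PP (⋃ p ∈ H, {ω : Fin m → X × Bool | ∀ i, ω i ∉ G p})
        ≤ ∑ p ∈ H, PP {ω : Fin m → X × Bool | ∀ i, ω i ∉ G p} := measure_biUnion_finset_le _ _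
      _ ≤ ∑ _p ∈ H, ENNReal.ofReal (δ / (2 * N)) := Finset.sum_le_sum hfail
      _ = H.card * ENNReal.ofReal (δ / (2 * N)) := by rw [Finset.sum_const, nsmul_eq_mul]
      _ ≤ (2 * N : ℕ) * ENNReal.ofReal (δ / (2 * N)) := by
          apply mul_le_mul_left
          exact_mod_cast Nat.cast_le.2 (hPcard ▸ Finset.card_filter_le P _)
      _ = ENNReal.ofReal ((2 * N : ℕ) * (δ / (2 * N))) := by
          rw [ENNReal.ofReal_mul (by positivity)]
          congr 1
          rw [ENNReal.ofReal_natCast]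
      _ = ENNReal.ofReal δ := by
          congr 1
          push_cast
          field_simp
  -- deterministic part : Ev ⊆ target
  have hdet : Ev ⊆ {ω : Fin m → X × Bool |
      ∀ f : X → Bool, (∀ i : Fin m, f (ω i).1 = xor (ω i).2 (fstar (ω i).1)) →
        (1 / 4 : ℝ≥0∞) ≤ advRisk μ ρ fstar f} := by
    intro ω hω f hf
    set Att : Set X := {x | ∃ z, dist z x ≤ ρ ∧ f z ≠ fstar x} with hAtt
    have hsubAtt : ∀ p ∈ H, R p ⊆ Att := by
      intro p hp x hx
      have hex : ∃ i, ω i ∈ G p := by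
        have := mem_iInter₂.1 hω p hp
        exact this
      obtain ⟨i, hi⟩ := hex
      obtain ⟨hz1, hz2⟩ := hi
      set z := (ω i).1 with hzdef
      have hzb : fstar z = p.2 := hz1.2
      have hflip : (ω i).2 = true := hz2
      have hfz : f z = !(fstar z) := by
        rw [hf i, hflip]
        cases fstar z <;> rfl
      have hxb : fstar x = p.2 := hx.2
      refine ⟨z, ?_, ?_⟩
      · have h1 : dist z p.1 ≤ ρ / 2 := hz1.1.2
        have h2 : dist x p.1 ≤ ρ / 2 := hx.1.2
        calc dist z x ≤ dist z p.1 + dist p.1 x := dist_triangle _ _ _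
          _ = dist z p.1 + dist x p.1 := by rw [dist_comm p.1 x]
          _ ≤ ρ := by linarith
      · rw [hfz, hzb, hxb]
        exact (Bool.not_ne_self p.2)
    -- mass of heavy union
    have hsum : 1 ≤ μ Att + (1 / 4 : ℝ≥0∞) := by
      have hsplit : K ⊆ (⋃ p ∈ H, R p) ∪ (⋃ p ∈ P \ H, R p) := by
        intro x hx
        obtain ⟨p, hp, hxp⟩ := mem_iUnion₂.1 (hKcover hx)
        by_cases hpH : p ∈ H
        · exact Or.inl (mem_iUnion₂.2 ⟨p, hpH, hxp⟩)
        · exact Or.inr (mem_iUnion₂.2 ⟨p, Finset.mem_sdiff.2 ⟨hp, hpH⟩, hxp⟩)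
      have hlight : μ (⋃ p ∈ P \ H, R p) ≤ (1 / 4 : ℝ≥0∞) := by
        calc μ (⋃ p ∈ P \ H, R p) ≤ ∑ p ∈ P \ H, μ (R p) := measure_biUnion_finset_le _ _
          _ ≤ ∑ _p ∈ P \ H, ENNReal.ofReal θ := by
              apply Finset.sum_le_sum
              intro p hp
              have := (Finset.mem_sdiff.1 hp).2
              rw [hHdef, Finset.mem_filter] at this
              push_neg at this
              exact (this ((Finset.mem_sdiff.1 hp).1)).le
          _ = (P \ H).card * ENNReal.ofReal θ := by rw [Finset.sum_const, nsmul_eq_mul]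
          _ ≤ (2 * N : ℕ) * ENNReal.ofReal θ := by
              apply mul_le_mul_left
              exact_mod_cast Nat.cast_le.2 (hPcard ▸ Finset.card_le_card (Finset.sdiff_subset))
          _ = ENNReal.ofReal ((2 * N : ℕ) * θ) := by
              rw [ENNReal.ofReal_mul (by positivity), ENNReal.ofReal_natCast]
          _ = ENNReal.ofReal (1 / 4 : ℝ) := by
              congr 1
              rw [hθdef]
              push_cast
              field_simp
              ring
          _ = (1 / 4 : ℝ≥0∞) := by
              rw [ENNReal.ofReal_div_of_pos (by norm_num)]
              norm_num
      have hheavy : μ (⋃ p ∈ H, R p) ≤ μ Att := measure_mono (iUnion₂_subset hsubAtt)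
      calc (1 : ℝ≥0∞) = μ K := hK1.symm
        _ ≤ μ ((⋃ p ∈ H, R p) ∪ (⋃ p ∈ P \ H, R p)) := measure_mono hsplit
        _ ≤ μ (⋃ p ∈ H, R p) + μ (⋃ p ∈ P \ H, R p) := measure_union_le _ _
        _ ≤ μ Att + (1 / 4 : ℝ≥0∞) := add_le_add hheavy hlight
    -- conclude 1/4 ≤ μ Att
    by_contra hlt
    push_neg at hlt
    have : μ Att + (1 / 4 : ℝ≥0∞) < (1 / 4 : ℝ≥0∞) + (1 / 4 : ℝ≥0∞) :=
      ENNReal.add_lt_add_right (by norm_num) hlt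
    have h12 : (1 / 4 : ℝ≥0∞) + (1 / 4 : ℝ≥0∞) < 1 := by
      rw [ENNReal.div_add_div_same]
      exact ENNReal.div_lt_of_lt_mul (by norm_num)
    exact absurd hsum (not_le.2 (this.trans h12))
  -- assemble
  have hPE : 1 - ENNReal.ofReal δ ≤ PP Ev := by
    have : PP Ev = 1 - PP Evᶜ := by
      have h := prob_compl_eq_one_sub (μ := PP) hEvMeas.compl
      rwa [compl_compl] at h
    rw [this]
    exact tsub_le_tsub_left hEvc 1
  exact hPE.trans (measure_mono hdet)
end

section
/- Let μ be a probability measure on ℝ^d, η > 0, m a positive integer, N = ⌊ηm⌋, and δ > 0. Define R^Poison_{ρ,N} = sup over s₁,...,s_N ∈ supp(μ) of μ(⋃_{k=1}^N B_ρ(s_k)). Let T ≥ (2N/(η·R^Poison_{ρ,N}))·(log N + log(1/δ)). Sample T i.i.d. points from μ and mark each independently with probability η; let R^Unif_{2ρ} = μ(⋃_{marked z_i} B_{2ρ}(z_i)). Then with probability at least 1 − δ, R^Unif_{2ρ} ≥ (1/2)·R^Poison_{ρ,N}. -/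
open MeasureTheory Metric Set
open scoped ENNReal NNReal

/-- The Poisoner's proxy adversarial risk: the maximal measure coverable by `N` balls of
radius `ρ` centered in the support of `μ`. -/
noncomputable def RPoison {d : ℕ} (μ : Measure (EuclideanSpace ℝ (Fin d)))
    (ρ : ℝ) (N : ℕ) : ℝ≥0∞ :=
  ⨆ (s : Fin N → EuclideanSpace ℝ (Fin d)) (_ : ∀ k, s k ∈ measureSupport μ),
    μ (⋃ k, closedBall (s k) ρ)

/-- The Uniform adversary's proxy adversarial risk at radius `2ρ`, for a realization
`ω` of `T` samples each carrying a mark (label-flip indicator): the measure of the union of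
`2ρ`-balls around the marked sample points. -/
noncomputable def RUnif {d : ℕ} (μ : Measure (EuclideanSpace ℝ (Fin d))) (ρ : ℝ) {T : ℕ}
    (ω : Fin T → EuclideanSpace ℝ (Fin d) × Bool) : ℝ≥0∞ :=
  μ (⋃ i ∈ {i : Fin T | (ω i).2 = true}, closedBall (ω i).1 (2 * ρ))

set_option maxHeartbeats 1000000 in
/-- **Uniform label noise is nearly as harmful as worst-case poisoning.**
With `N = ⌊ηm⌋` and `T ≥ (2N/(η·R^Poison))·(log N + log(1/δ))` i.i.d. samples each marked
independently with probability `η`, with probability at least `1 − δ` the Uniform adversary's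
proxy risk at radius `2ρ` is at least half the Poisoner's proxy risk at radius `ρ`. -/
theorem uniform_vs_poisoning {d : ℕ} (μ : Measure (EuclideanSpace ℝ (Fin d)))
    [IsProbabilityMeasure μ]
    (η : ℝ) (hη0 : 0 < η) (hη1 : ENNReal.ofReal η ≤ 1)
    (m : ℕ) (hm : 0 < m) (N : ℕ) (hN : N = Nat.floor (η * m))
    (δ : ℝ) (hδ : 0 < δ) (ρ : ℝ) (hρ : 0 < ρ) (T : ℕ)
    (hT : (2 * N / (η * (RPoison μ ρ N).toReal)) * (Real.log N + Real.log (1 / δ)) ≤ T) :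
    1 - ENNReal.ofReal δ ≤
      (Measure.pi (fun _ : Fin T =>
          μ.prod ((PMF.bernoulli (Real.toNNReal η) (ENNReal.coe_le_one_iff.mp hη1)).toMeasure)))
        {ω : Fin T → EuclideanSpace ℝ (Fin d) × Bool |
          (1 / 2 : ℝ≥0∞) * RPoison μ ρ N ≤ RUnif μ ρ ω} := by
  classical
  set ν := (PMF.bernoulli (Real.toNNReal η) (ENNReal.coe_le_one_iff.mp hη1)).toMeasure with hν
  set P := Measure.pi (fun _ : Fin T => μ.prod ν) with hPdef
  set R := RPoison μ ρ N with hR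
  have hR1 : R ≤ 1 := by
    rw [hR, RPoison]
    exact iSup_le fun s => iSup_le fun _ => prob_le_one
  have hRtop : R ≠ ∞ := (lt_of_le_of_lt hR1 ENNReal.one_lt_top).ne
  have hPprob : IsProbabilityMeasure P := by rw [hPdef]; infer_instance
  by_cases hR0 : R = 0
  · have : {ω : Fin T → EuclideanSpace ℝ (Fin d) × Bool |
        (1 / 2 : ℝ≥0∞) * R ≤ RUnif μ ρ ω} = univ := by
      apply eq_univ_of_forall
      intro ω
      simp [hR0]
    rw [this, measure_univ]
    exact tsub_le_self
  have hNpos : 0 < N := by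
    rcases Nat.eq_zero_or_pos N with h | h
    · exfalso; apply hR0
      rw [hR, RPoison]
      apply le_antisymm _ zero_le
      refine iSup_le fun s => iSup_le fun _ => ?_
      subst h
      simp
    · exact h
  set r := R.toReal with hrdef
  have hr0 : 0 < r := ENNReal.toReal_pos hR0 hRtop
  have hRr : R = ENNReal.ofReal r := (ENNReal.ofReal_toReal hRtop).symm
  have hr1 : r ≤ 1 := by
    have := ENNReal.toReal_mono (by simp) hR1
    simpa using this
  have hη1' : η ≤ 1 := ENNReal.ofReal_le_one.mp hη1
  set L := Real.log N + Real.log (1 / δ) with hL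
  -- the key per-ε estimate
  have key : ∀ ε : ℝ, ε ∈ Set.Ioo 0 (r / 2) →
      1 - ENNReal.ofReal (δ * Real.exp ((2 * ε / r) * L)) ≤
        P {ω : Fin T → EuclideanSpace ℝ (Fin d) × Bool |
          (1 / 2 : ℝ≥0∞) * R ≤ RUnif μ ρ ω} := by
    intro ε hε
    obtain ⟨hε0, hεr⟩ := hε
    -- choose nearly optimal centers
    have hlt : R - ENNReal.ofReal ε < RPoison μ ρ N := by
      rw [← hR]
      exact ENNReal.sub_lt_self hRtop hR0 (by simpa using hε0)
    rw [RPoison, lt_iSup_iff] at hlt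
    obtain ⟨s, hlt⟩ := hlt
    rw [lt_iSup_iff] at hlt
    obtain ⟨hs, hsU⟩ := hlt
    set A : Fin N → Set (EuclideanSpace ℝ (Fin d)) := fun k => closedBall (s k) ρ with hA
    set t : ℝ := (r - 2 * ε) / (2 * N) with ht
    have hNr : (0:ℝ) < N := by exact_mod_cast hNpos
    have htpos : 0 < t := div_pos (by linarith) (by positivity)
    have hNt : (N : ℝ) * t = r / 2 - ε := by
      rw [ht, mul_div_assoc', div_eq_iff (by positivity)]
      ring
    have ht_le : t ≤ 1 / 2 := by
      rw [ht, div_le_iff₀ (by positivity)]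
      have : (1:ℝ) ≤ N := by exact_mod_cast hNpos
      nlinarith
    have htη : 0 ≤ 1 - t * η := by nlinarith
    set H : Finset (Fin N) := Finset.univ.filter (fun k => ENNReal.ofReal t ≤ μ (A k)) with hH
    -- the heavy balls carry at least half the poisoner's risk
    have hheavy : ENNReal.ofReal (r / 2) ≤ μ (⋃ k ∈ H, A k) := by
      have h1 : μ (⋃ k, A k) ≤ μ (⋃ k ∈ H, A k) + ENNReal.ofReal ((N : ℝ) * t) := by
        have hsplit : (⋃ k, A k) ⊆ (⋃ k ∈ H, A k) ∪ (⋃ k ∈ Finset.univ \ H, A k) := by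
          intro x hx
          rcases mem_iUnion.mp hx with ⟨k, hk⟩
          by_cases hkH : k ∈ H
          · exact Or.inl (mem_biUnion hkH hk)
          · exact Or.inr (mem_biUnion (Finset.mem_sdiff.mpr ⟨Finset.mem_univ _, hkH⟩) hk)
        have hlight : μ (⋃ k ∈ Finset.univ \ H, A k) ≤ ENNReal.ofReal ((N : ℝ) * t) := by
          calc μ (⋃ k ∈ Finset.univ \ H, A k) ≤ ∑ k ∈ Finset.univ \ H, μ (A k) :=
                measure_biUnion_finset_le _ _
            _ ≤ ∑ _k ∈ Finset.univ \ H, ENNReal.ofReal t := by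
                refine Finset.sum_le_sum fun k hk => ?_
                have : k ∉ H := (Finset.mem_sdiff.mp hk).2
                rw [hH, Finset.mem_filter] at this
                push_neg at this
                exact (this (Finset.mem_univ _)).le
            _ = (Finset.univ \ H).card • ENNReal.ofReal t := by rw [Finset.sum_const]
            _ ≤ (N : ℝ≥0∞) * ENNReal.ofReal t := by
                rw [nsmul_eq_mul]
                refine mul_le_mul_left ?_ _
                have : (Finset.univ \ H).card ≤ N := le_trans (Finset.card_le_univ _) (by simp)
                exact_mod_cast this
            _ = ENNReal.ofReal ((N : ℝ) * t) := by
                rw [ENNReal.ofReal_mul (by positivity), ENNReal.ofReal_natCast]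
        calc μ (⋃ k, A k) ≤ μ ((⋃ k ∈ H, A k) ∪ (⋃ k ∈ Finset.univ \ H, A k)) :=
              measure_mono hsplit
          _ ≤ μ (⋃ k ∈ H, A k) + μ (⋃ k ∈ Finset.univ \ H, A k) := measure_union_le _ _
          _ ≤ μ (⋃ k ∈ H, A k) + ENNReal.ofReal ((N : ℝ) * t) := add_le_add_right hlight _
      have h2 : R ≤ μ (⋃ k, A k) + ENNReal.ofReal ε :=
        tsub_le_iff_right.mp hsU.le
      have h3 : R ≤ μ (⋃ k ∈ H, A k) + ENNReal.ofReal ((N : ℝ) * t + ε) := by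
        calc R ≤ μ (⋃ k, A k) + ENNReal.ofReal ε := h2
          _ ≤ (μ (⋃ k ∈ H, A k) + ENNReal.ofReal ((N : ℝ) * t)) + ENNReal.ofReal ε :=
              add_le_add_left h1 _
          _ = μ (⋃ k ∈ H, A k) + ENNReal.ofReal ((N : ℝ) * t + ε) := by
              rw [add_assoc, ← ENNReal.ofReal_add (by positivity) hε0.le]
      have hsumR : ENNReal.ofReal (r / 2) + ENNReal.ofReal ((N : ℝ) * t + ε) = R := by
        rw [← ENNReal.ofReal_add (by linarith) (by nlinarith [hNt]), hRr]
        congr 1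
        rw [hNt]; ring
      have := hsumR ▸ h3
      exact (ENNReal.add_le_add_iff_right ENNReal.ofReal_ne_top).mp this
    -- bad events
    set Bad : Fin N → Set (Fin T → EuclideanSpace ℝ (Fin d) × Bool) := fun k =>
      Set.pi Set.univ (fun _ => ((A k) ×ˢ ({true} : Set Bool))ᶜ) with hBad
    have hCmeas : ∀ k, MeasurableSet ((A k) ×ˢ ({true} : Set Bool)) := fun k =>
      measurableSet_closedBall.prod (measurableSet_singleton true)
    have hBadMeas : ∀ k, MeasurableSet (Bad k) := fun k =>
      MeasurableSet.univ_pi fun _ => (hCmeas k).compl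
    have hνtrue : ν ({true} : Set Bool) = ENNReal.ofReal η := by
      rw [hν, PMF.toMeasure_apply_singleton _ _ (measurableSet_singleton true)]
      rfl
    have hBadP : ∀ k, P (Bad k) = (1 - μ (A k) * ENNReal.ofReal η) ^ T := by
      intro k
      rw [hPdef, hBad]
      rw [Measure.pi_pi]
      have hC : (μ.prod ν) (((A k) ×ˢ ({true} : Set Bool))ᶜ) =
          1 - μ (A k) * ENNReal.ofReal η := by
        rw [prob_compl_eq_one_sub (hCmeas k), Measure.prod_prod, hνtrue]
      simp only [hC]
      rw [Finset.prod_const, Finset.card_univ, Fintype.card_fin]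
    have hBadP_le : ∀ k ∈ H, P (Bad k) ≤ ENNReal.ofReal ((1 - t * η) ^ T) := by
      intro k hk
      rw [hBadP]
      have hk' : ENNReal.ofReal t ≤ μ (A k) := (Finset.mem_filter.mp hk).2
      have hmul : ENNReal.ofReal (t * η) ≤ μ (A k) * ENNReal.ofReal η := by
        rw [ENNReal.ofReal_mul htpos.le]
        exact mul_le_mul_left hk' _
      calc (1 - μ (A k) * ENNReal.ofReal η) ^ T ≤ (1 - ENNReal.ofReal (t * η)) ^ T :=
            pow_le_pow_left' (tsub_le_tsub_left hmul 1) T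
        _ = (ENNReal.ofReal (1 - t * η)) ^ T := by
            rw [ENNReal.ofReal_sub _ (by positivity), ENNReal.ofReal_one]
        _ = ENNReal.ofReal ((1 - t * η) ^ T) := (ENNReal.ofReal_pow htη T).symm
    set G : Set (Fin T → EuclideanSpace ℝ (Fin d) × Bool) := ⋂ k ∈ H, (Bad k)ᶜ with hG
    have hGmeas : MeasurableSet G :=
      MeasurableSet.biInter (Set.to_countable _) fun k _ => (hBadMeas k).compl
    -- on the good event, every heavy ball contains a marked sample
    have hGsub : G ⊆ {ω : Fin T → EuclideanSpace ℝ (Fin d) × Bool |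
        (1 / 2 : ℝ≥0∞) * R ≤ RUnif μ ρ ω} := by
      intro ω hω
      have hcover : (⋃ k ∈ H, A k) ⊆
          ⋃ i ∈ {i : Fin T | (ω i).2 = true}, closedBall (ω i).1 (2 * ρ) := by
        intro x hx
        rcases mem_iUnion₂.mp hx with ⟨k, hkH, hxk⟩
        have hωk : ω ∉ Bad k := by
          have := mem_iInter₂.mp hω k hkH
          simpa using this
        rw [hBad, Set.mem_pi] at hωk
        push_neg at hωk
        obtain ⟨i, _, hi⟩ := hωk
        rw [notMem_compl_iff, Set.mem_prod, Set.mem_singleton_iff] at hi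
        obtain ⟨hi1, hi2⟩ := hi
        refine mem_iUnion₂.mpr ⟨i, hi2, ?_⟩
        rw [mem_closedBall]
        have hxs : dist x (s k) ≤ ρ := mem_closedBall.mp hxk
        have hsi : dist (s k) (ω i).1 ≤ ρ := by
          rw [dist_comm]; exact mem_closedBall.mp hi1
        calc dist x (ω i).1 ≤ dist x (s k) + dist (s k) (ω i).1 := dist_triangle _ _ _
          _ ≤ 2 * ρ := by linarith
      show (1 / 2 : ℝ≥0∞) * R ≤ RUnif μ ρ ω
      have h12 : (1 / 2 : ℝ≥0∞) * R = ENNReal.ofReal (r / 2) := by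
        rw [hRr, show (1 / 2 : ℝ≥0∞) = ENNReal.ofReal (1 / 2) by
          rw [ENNReal.ofReal_div_of_pos (by norm_num), ENNReal.ofReal_one,
            ENNReal.ofReal_ofNat]]
        rw [← ENNReal.ofReal_mul (by norm_num)]
        ring_nf
      rw [h12]
      calc ENNReal.ofReal (r / 2) ≤ μ (⋃ k ∈ H, A k) := hheavy
        _ ≤ RUnif μ ρ ω := measure_mono hcover
    -- probability of the bad event
    have hGc : P Gᶜ ≤ ENNReal.ofReal ((N : ℝ) * (1 - t * η) ^ T) := by
      have hGcEq : Gᶜ = ⋃ k ∈ H, Bad k := by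
        rw [hG]
        simp [compl_iInter]
      rw [hGcEq]
      calc P (⋃ k ∈ H, Bad k) ≤ ∑ k ∈ H, P (Bad k) := measure_biUnion_finset_le _ _
        _ ≤ ∑ _k ∈ H, ENNReal.ofReal ((1 - t * η) ^ T) := Finset.sum_le_sum hBadP_le
        _ = H.card • ENNReal.ofReal ((1 - t * η) ^ T) := by rw [Finset.sum_const]
        _ ≤ (N : ℝ≥0∞) * ENNReal.ofReal ((1 - t * η) ^ T) := by
            rw [nsmul_eq_mul]
            refine mul_le_mul_left ?_ _
            have : H.card ≤ N := le_trans (Finset.card_le_univ _) (by simp)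
            exact_mod_cast this
        _ = ENNReal.ofReal ((N : ℝ) * (1 - t * η) ^ T) := by
            rw [ENNReal.ofReal_mul (by positivity), ENNReal.ofReal_natCast]
    -- numerical estimate
    have hfinal : (N : ℝ) * (1 - t * η) ^ T ≤ δ * Real.exp ((2 * ε / r) * L) := by
      have hstep1 : (1 - t * η) ^ T ≤ Real.exp (-(t * η * T)) := by
        have h1 : 1 - t * η ≤ Real.exp (-(t * η)) := by
          have := Real.add_one_le_exp (-(t * η))
          linarith
        calc (1 - t * η) ^ T ≤ Real.exp (-(t * η)) ^ T := pow_le_pow_left₀ htη h1 T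
          _ = Real.exp (-(t * η) * T) := by rw [← Real.exp_nat_mul]; ring_nf
          _ = Real.exp (-(t * η * T)) := by ring_nf
      have htη0 : 0 < t * η := mul_pos htpos hη0
      have hTineq : (1 - 2 * ε / r) * L ≤ t * η * T := by
        have hc : t * η * (2 * N / (η * r)) = 1 - 2 * ε / r := by
          rw [ht]
          field_simp
        have := mul_le_mul_of_nonneg_left hT htη0.le
        calc (1 - 2 * ε / r) * L = t * η * ((2 * N / (η * r)) * L) := by
              rw [← mul_assoc, hc]
          _ ≤ t * η * T := this
      have hexp : Real.exp (-(t * η * T)) ≤ Real.exp (-L) * Real.exp ((2 * ε / r) * L) := by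
        rw [← Real.exp_add]
        apply Real.exp_le_exp.mpr
        nlinarith [hTineq]
      have hNexp : (N : ℝ) * Real.exp (-L) = δ := by
        rw [hL, neg_add, Real.exp_add, Real.exp_neg, Real.exp_neg, Real.exp_log hNr,
          Real.exp_log (by positivity : (0:ℝ) < 1 / δ)]
        field_simp
      calc (N : ℝ) * (1 - t * η) ^ T ≤ (N : ℝ) * Real.exp (-(t * η * T)) := by
            apply mul_le_mul_of_nonneg_left hstep1 (by positivity)
        _ ≤ (N : ℝ) * (Real.exp (-L) * Real.exp ((2 * ε / r) * L)) := by
            apply mul_le_mul_of_nonneg_left hexp (by positivity)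
        _ = δ * Real.exp ((2 * ε / r) * L) := by rw [← mul_assoc, hNexp]
    -- combine
    calc 1 - ENNReal.ofReal (δ * Real.exp ((2 * ε / r) * L)) ≤ 1 - P Gᶜ := by
          apply tsub_le_tsub_left
          exact hGc.trans (ENNReal.ofReal_le_ofReal hfinal)
      _ = P G := by
          have := prob_compl_eq_one_sub (μ := P) hGmeas.compl
          rw [compl_compl] at this
          exact this.symm
      _ ≤ P {ω : Fin T → EuclideanSpace ℝ (Fin d) × Bool |
          (1 / 2 : ℝ≥0∞) * R ≤ RUnif μ ρ ω} := measure_mono hGsub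
  -- take the limit ε → 0⁺
  have hcont : Filter.Tendsto (fun ε : ℝ => 1 - ENNReal.ofReal (δ * Real.exp ((2 * ε / r) * L)))
      (nhdsWithin 0 (Set.Ioi 0)) (nhds (1 - ENNReal.ofReal δ)) := by
    have hc : Continuous fun ε : ℝ =>
        1 - ENNReal.ofReal (δ * Real.exp ((2 * ε / r) * L)) := by
      apply (ENNReal.continuous_sub_left ENNReal.one_ne_top).comp
      exact ENNReal.continuous_ofReal.comp (by continuity)
    refine Filter.Tendsto.mono_left ?_ nhdsWithin_le_nhds
    simpa using hc.tendsto 0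
  refine le_of_tendsto hcont ?_
  filter_upwards [Ioo_mem_nhdsGT_of_mem
      (Set.mem_Ico.mpr ⟨le_refl (0:ℝ), (by linarith : (0:ℝ) < r / 2)⟩)]
    with ε hε
  exact key ε hε
end
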